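/- arXiv:2007.14171 — 3 statements merged into one kernel-verified Lean document; each statement's English description precedes it below -/
import Mathlib

section
/- For n, m ∈ ℕ and commutative k-algebras A and C, the map sending a 2-variate higher derivation D = (D_{(i,j)}) ∈ HS^{(n,m)}_k(A,C) to the family E = (E_i)_{i=0}^n of maps A → C[Y]/(Y^{m+1}) defined by E_i(a) = Σ_{j=0}^m D_{(i,j)}(a)·Y^j is well defined (E is a higher derivation of order n from A to C[Y]/(Y^{m+1}) over k) and is a bijection from HS^{(n,m)}_k(A,C) onto HS^n_k(A, C[Y]/(Y^{m+1})). -/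
open Polynomial Finset

/-- A higher derivation of order `n` from `A` to `C'` over `k`. -/
def IsHSDeriv (k : Type*) {A C' : Type*} [CommRing k] [CommRing A] [CommRing C']
    [Algebra k A] [Algebra k C'] (n : ℕ) (E : Fin (n + 1) → (A →ₗ[k] C')) : Prop :=
  E 0 1 = 1 ∧
    ∀ (i : Fin (n + 1)) (a b : A),
      E i (a * b) =
        ∑ p : Fin (n + 1), ∑ q : Fin (n + 1),
          if (p : ℕ) + (q : ℕ) = (i : ℕ) then E p a * E q b else 0

/-- A 2-variate higher derivation of order `(n,m)` from `A` to `C` over `k`. -/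
def IsHSDeriv2 (k : Type*) {A C : Type*} [CommRing k] [CommRing A] [CommRing C]
    [Algebra k A] [Algebra k C] (n m : ℕ)
    (D : Fin (n + 1) → Fin (m + 1) → (A →ₗ[k] C)) : Prop :=
  D 0 0 1 = 1 ∧
    ∀ (i : Fin (n + 1)) (j : Fin (m + 1)) (a b : A),
      D i j (a * b) =
        ∑ p : Fin (n + 1), ∑ q : Fin (m + 1), ∑ r : Fin (n + 1), ∑ s : Fin (m + 1),
          if (p : ℕ) + (r : ℕ) = (i : ℕ) ∧ (q : ℕ) + (s : ℕ) = (j : ℕ) then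
            D p q a * D r s b else 0

section Aux

variable (k : Type*) {C : Type*} [CommRing k] [CommRing C] [Algebra k C] (m : ℕ)

noncomputable def PhiLin : (Fin (m+1) → C) →ₗ[k] (Polynomial C ⧸ Ideal.span {(X : Polynomial C) ^ (m+1)}) :=
  ((Ideal.Quotient.mkₐ k (Ideal.span {(X : Polynomial C) ^ (m+1)})).toLinearMap).comp
    (∑ j : Fin (m+1), ((Polynomial.monomial (j:ℕ)).restrictScalars k).comp (LinearMap.proj j))

theorem PhiLin_apply (c : Fin (m+1) → C) :
    PhiLin k m c = Ideal.Quotient.mk _ (∑ j : Fin (m+1), monomial (j:ℕ) (c j)) := by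
  simp [PhiLin]

theorem coeff_sum_monomial (c : Fin (m+1) → C) (j : Fin (m+1)) :
    (∑ j' : Fin (m+1), monomial (j':ℕ) (c j')).coeff (j:ℕ) = c j := by
  rw [finset_sum_coeff]
  rw [Finset.sum_eq_single j]
  · simp
  · intro b _ hb
    rw [coeff_monomial, if_neg (by simpa [Fin.val_eq_val] using hb)]
  · simp

theorem PhiLin_injective : Function.Injective (PhiLin k m (C := C)) := by
  rw [injective_iff_map_eq_zero]
  intro c hc
  rw [PhiLin_apply, Ideal.Quotient.eq_zero_iff_mem, Ideal.mem_span_singleton,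
    X_pow_dvd_iff] at hc
  funext j
  have := hc (j:ℕ) j.isLt
  rwa [coeff_sum_monomial] at this

theorem PhiLin_mk (p : Polynomial C) :
    Ideal.Quotient.mk _ p = PhiLin k m (fun j => p.coeff (j:ℕ)) := by
  rw [PhiLin_apply, Ideal.Quotient.eq, Ideal.mem_span_singleton, X_pow_dvd_iff]
  intro d hd
  rw [coeff_sub, sub_eq_zero]
  exact (coeff_sum_monomial m (fun j => p.coeff (j:ℕ)) ⟨d, hd⟩).symm

theorem PhiLin_surjective : Function.Surjective (PhiLin k m (C := C)) := by
  intro x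
  obtain ⟨p, rfl⟩ := Ideal.Quotient.mk_surjective x
  exact ⟨_, (PhiLin_mk k m p).symm⟩

theorem PhiLin_one : PhiLin k m (fun j => if j = 0 then (1:C) else 0) = 1 := by
  rw [PhiLin_apply]
  rw [Finset.sum_eq_single 0]
  · simp
  · intro b _ hb; simp [hb]
  · simp

theorem mk_monomial (q s : Fin (m+1)) (x : C) :
    Ideal.Quotient.mk (Ideal.span {(X : Polynomial C) ^ (m+1)}) (monomial ((q:ℕ)+(s:ℕ)) x) =
      ∑ j : Fin (m+1), if (q:ℕ) + (s:ℕ) = (j:ℕ) then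
        Ideal.Quotient.mk (Ideal.span {(X : Polynomial C) ^ (m+1)}) (monomial (j:ℕ) x) else 0 := by
  by_cases h : (q:ℕ) + (s:ℕ) < m + 1
  · rw [Finset.sum_eq_single (⟨(q:ℕ)+(s:ℕ), h⟩ : Fin (m+1))]
    · rw [if_pos rfl]
    · intro b _ hb
      rw [if_neg]
      intro hc
      exact hb (Fin.ext hc.symm)
    · intro hb; exact absurd (Finset.mem_univ _) hb
  · rw [Finset.sum_eq_zero, Ideal.Quotient.eq_zero_iff_mem, Ideal.mem_span_singleton,
      X_pow_dvd_iff]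
    · intro d hd
      rw [coeff_monomial, if_neg (by omega)]
    · intro b _
      rw [if_neg]
      omega

theorem PhiLin_mul (c d : Fin (m+1) → C) :
    PhiLin k m c * PhiLin k m d =
      PhiLin k m (fun j => ∑ q : Fin (m+1), ∑ s : Fin (m+1),
        if (q:ℕ) + (s:ℕ) = (j:ℕ) then c q * d s else 0) := by
  rw [PhiLin_apply, PhiLin_apply, PhiLin_apply, ← map_mul, Finset.sum_mul_sum]
  simp_rw [monomial_mul_monomial]
  rw [map_sum]
  simp_rw [map_sum, mk_monomial m]
  rw [show (∑ q : Fin (m+1), ∑ s : Fin (m+1), ∑ j : Fin (m+1),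
      if (q:ℕ)+(s:ℕ)=(j:ℕ) then Ideal.Quotient.mk (Ideal.span {(X : Polynomial C) ^ (m+1)}) (monomial (j:ℕ) (c q * d s)) else 0)
      = ∑ q : Fin (m+1), ∑ j : Fin (m+1), ∑ s : Fin (m+1),
      if (q:ℕ)+(s:ℕ)=(j:ℕ) then Ideal.Quotient.mk (Ideal.span {(X : Polynomial C) ^ (m+1)}) (monomial (j:ℕ) (c q * d s)) else 0
    from Finset.sum_congr rfl fun q _ => Finset.sum_comm]
  rw [Finset.sum_comm]
  refine Finset.sum_congr rfl fun j _ => ?_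
  simp only [map_sum, apply_ite (⇑(monomial ((j:ℕ)) : C →ₗ[C] C[X])), monomial_zero_right,
    map_zero, apply_ite (⇑(Ideal.Quotient.mk (Ideal.span {(X : C[X]) ^ (m+1)})))]


theorem foursum_eq {n : ℕ} (i : Fin (n+1)) (j : Fin (m+1))
    (x y : Fin (n+1) → Fin (m+1) → C) :
    (∑ p : Fin (n+1), ∑ q : Fin (m+1), ∑ r : Fin (n+1), ∑ s : Fin (m+1),
      if (p:ℕ)+(r:ℕ)=(i:ℕ) ∧ (q:ℕ)+(s:ℕ)=(j:ℕ) then x p q * y r s else 0)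
    = ∑ p : Fin (n+1), ∑ r : Fin (n+1),
        if (p:ℕ)+(r:ℕ)=(i:ℕ) then
          (∑ q : Fin (m+1), ∑ s : Fin (m+1),
            if (q:ℕ)+(s:ℕ)=(j:ℕ) then x p q * y r s else 0)
        else 0 := by
  refine Finset.sum_congr rfl fun p _ => ?_
  rw [Finset.sum_comm]
  refine Finset.sum_congr rfl fun r _ => ?_
  by_cases h : (p:ℕ)+(r:ℕ)=(i:ℕ) <;> simp [h]

noncomputable def Phi : (Fin (m+1) → C) ≃ₗ[k]
    (Polynomial C ⧸ Ideal.span {(X : Polynomial C) ^ (m+1)}) :=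
  LinearEquiv.ofBijective (PhiLin k m) ⟨PhiLin_injective k m, PhiLin_surjective k m⟩

variable {A : Type*} [CommRing A] [Algebra k A] (n : ℕ)

noncomputable def toE (D : Fin (n+1) → Fin (m+1) → (A →ₗ[k] C)) :
    Fin (n+1) → (A →ₗ[k] Polynomial C ⧸ Ideal.span {(X : Polynomial C) ^ (m+1)}) :=
  fun i => (PhiLin k m).comp (LinearMap.pi (D i))

theorem toE_apply (D : Fin (n+1) → Fin (m+1) → (A →ₗ[k] C)) (i : Fin (n+1)) (a : A) :
    toE k m n D i a = PhiLin k m (fun j => D i j a) := rfl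

theorem rhs_eq (D : Fin (n+1) → Fin (m+1) → (A →ₗ[k] C)) (i : Fin (n+1)) (a b : A) :
    (∑ p : Fin (n + 1), ∑ q : Fin (n + 1),
        if (p:ℕ)+(q:ℕ)=(i:ℕ) then toE k m n D p a * toE k m n D q b else 0)
      = PhiLin k m (fun j => ∑ p : Fin (n + 1), ∑ q : Fin (n + 1),
          if (p:ℕ)+(q:ℕ)=(i:ℕ) then
            (∑ u : Fin (m+1), ∑ s : Fin (m+1),
              if (u:ℕ)+(s:ℕ)=(j:ℕ) then D p u a * D q s b else 0) else 0) := by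
  have h1 : (fun j : Fin (m+1) => ∑ p : Fin (n + 1), ∑ q : Fin (n + 1),
          if (p:ℕ)+(q:ℕ)=(i:ℕ) then
            (∑ u : Fin (m+1), ∑ s : Fin (m+1),
              if (u:ℕ)+(s:ℕ)=(j:ℕ) then D p u a * D q s b else 0) else 0)
      = ∑ p : Fin (n + 1), ∑ q : Fin (n + 1),
          if (p:ℕ)+(q:ℕ)=(i:ℕ) then
            (fun j : Fin (m+1) => ∑ u : Fin (m+1), ∑ s : Fin (m+1),
              if (u:ℕ)+(s:ℕ)=(j:ℕ) then D p u a * D q s b else 0) else 0 := by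
    funext j
    simp [Finset.sum_apply, ite_apply]
  rw [h1, map_sum]
  simp only [map_sum, apply_ite (⇑(PhiLin k m (C := C))), map_zero]
  refine Finset.sum_congr rfl fun p _ => Finset.sum_congr rfl fun q _ => ?_
  rw [toE_apply, toE_apply, PhiLin_mul]

theorem cond2_iff (D : Fin (n+1) → Fin (m+1) → (A →ₗ[k] C)) :
    (∀ (i : Fin (n + 1)) (j : Fin (m + 1)) (a b : A),
      D i j (a * b) =
        ∑ p : Fin (n + 1), ∑ q : Fin (m + 1), ∑ r : Fin (n + 1), ∑ s : Fin (m + 1),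
          if (p : ℕ) + (r : ℕ) = (i : ℕ) ∧ (q : ℕ) + (s : ℕ) = (j : ℕ) then
            D p q a * D r s b else 0)
    ↔ (∀ (i : Fin (n + 1)) (a b : A),
      toE k m n D i (a * b) =
        ∑ p : Fin (n + 1), ∑ q : Fin (n + 1),
          if (p : ℕ) + (q : ℕ) = (i : ℕ) then toE k m n D p a * toE k m n D q b else 0) := by
  constructor
  · intro h i a b
    rw [toE_apply, rhs_eq]
    congr 1
    funext j
    rw [h i j a b, foursum_eq]
  · intro h i j a b
    have h2 := h i a b
    rw [toE_apply, rhs_eq] at h2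
    have h3 := PhiLin_injective k m h2
    rw [foursum_eq]
    exact congrFun h3 j

theorem red_lemma (D : Fin (n+1) → Fin (m+1) → (A →ₗ[k] C))
    (h2 : ∀ (i : Fin (n + 1)) (j : Fin (m + 1)) (a b : A),
      D i j (a * b) =
        ∑ p : Fin (n + 1), ∑ q : Fin (m + 1), ∑ r : Fin (n + 1), ∑ s : Fin (m + 1),
          if (p : ℕ) + (r : ℕ) = (i : ℕ) ∧ (q : ℕ) + (s : ℕ) = (j : ℕ) then
            D p q a * D r s b else 0) (j : Fin (m+1)) :
    D 0 j 1 = ∑ q : Fin (m+1), ∑ s : Fin (m+1),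
      if (q:ℕ)+(s:ℕ)=(j:ℕ) then D 0 q 1 * D 0 s 1 else 0 := by
  have h := h2 0 j 1 1
  rw [one_mul] at h
  rw [h, Finset.sum_eq_single (0 : Fin (n+1))]
  · refine Finset.sum_congr rfl fun q _ => ?_
    rw [Finset.sum_eq_single (0 : Fin (n+1))]
    · refine Finset.sum_congr rfl fun s _ => ?_
      simp
    · intro r _ hr
      apply Finset.sum_eq_zero
      intro s _
      rw [if_neg]
      rintro ⟨hc, -⟩
      simp only [Fin.val_zero] at hc
      exact hr (Fin.ext (by simp only [Fin.val_zero]; omega))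
    · intro hmem; exact absurd (Finset.mem_univ _) hmem
  · intro p _ hp
    apply Finset.sum_eq_zero; intro q _
    apply Finset.sum_eq_zero; intro r _
    apply Finset.sum_eq_zero; intro s _
    rw [if_neg]
    rintro ⟨hc, -⟩
    simp only [Fin.val_zero] at hc
    exact hp (Fin.ext (by simp only [Fin.val_zero]; omega))
  · intro hmem; exact absurd (Finset.mem_univ _) hmem

theorem unit_lemma (D : Fin (n+1) → Fin (m+1) → (A →ₗ[k] C))
    (h1 : D 0 0 1 = 1)
    (h2 : ∀ (i : Fin (n + 1)) (j : Fin (m + 1)) (a b : A),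
      D i j (a * b) =
        ∑ p : Fin (n + 1), ∑ q : Fin (m + 1), ∑ r : Fin (n + 1), ∑ s : Fin (m + 1),
          if (p : ℕ) + (r : ℕ) = (i : ℕ) ∧ (q : ℕ) + (s : ℕ) = (j : ℕ) then
            D p q a * D r s b else 0) :
    ∀ j : Fin (m+1), D 0 j 1 = if j = 0 then 1 else 0 := by
  suffices H : ∀ t : ℕ, ∀ j : Fin (m + 1), (j:ℕ) = t → D 0 j 1 = if j = 0 then 1 else 0 by
    intro j; exact H (j:ℕ) j rfl
  intro t
  induction t using Nat.strong_induction_on with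
  | _ t IH =>
    intro j hj
    rcases Nat.eq_zero_or_pos t with ht | ht
    · have hj0 : j = 0 := Fin.ext (by simp only [Fin.val_zero]; omega)
      rw [hj0, if_pos rfl]; exact h1
    · have hj0 : j ≠ 0 := by
        intro hc; rw [hc] at hj; simp only [Fin.val_zero] at hj; omega
      rw [if_neg hj0]
      have key : ∀ q s : Fin (m+1),
          (if (q:ℕ)+(s:ℕ)=(j:ℕ) then D 0 q 1 * D 0 s 1 else 0)
          = (if q = 0 ∧ s = j then D 0 j 1 else 0)
            + (if q = j ∧ s = 0 then D 0 j 1 else 0) := by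
        intro q s
        by_cases hB : q = 0 ∧ s = j
        · obtain ⟨hq, hs⟩ := hB
          rw [hq, hs, if_pos (by simp only [Fin.val_zero, Nat.zero_add]),
            if_pos ⟨rfl, rfl⟩, if_neg (fun hc => hj0 hc.1.symm), h1, one_mul, add_zero]
        · by_cases hC : q = j ∧ s = 0
          · obtain ⟨hq, hs⟩ := hC
            rw [hq, hs, if_pos (by simp only [Fin.val_zero, Nat.add_zero]),
              if_neg (fun hc => hj0 hc.1), if_pos ⟨rfl, rfl⟩, h1, mul_one, zero_add]
          · rw [if_neg hB, if_neg hC, add_zero]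
            by_cases hA : (q:ℕ)+(s:ℕ)=(j:ℕ)
            · rw [if_pos hA]
              have hq0 : q ≠ 0 := by
                rintro rfl
                refine hB ⟨rfl, Fin.ext ?_⟩
                simpa using hA
              have hs0 : s ≠ 0 := by
                rintro rfl
                refine hC ⟨Fin.ext ?_, rfl⟩
                simpa using hA
              have hsv : (s:ℕ) ≠ 0 := fun hc => hs0 (Fin.ext (by simpa using hc))
              have hqlt : (q:ℕ) < t := by omega
              rw [IH (q:ℕ) hqlt q rfl, if_neg hq0, zero_mul]
            · rw [if_neg hA]
      have e1 : (∑ q : Fin (m+1), ∑ s : Fin (m+1),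
          if q = 0 ∧ s = j then D 0 j 1 else 0) = D 0 j 1 := by
        simp [ite_and, Finset.sum_ite_eq']
      have e2 : (∑ q : Fin (m+1), ∑ s : Fin (m+1),
          if q = j ∧ s = 0 then D 0 j 1 else 0) = D 0 j 1 := by
        simp [ite_and, Finset.sum_ite_eq']
      have heq : D 0 j 1 = D 0 j 1 + D 0 j 1 := by
        conv_lhs => rw [red_lemma k m n D h2 j]
        simp_rw [key, Finset.sum_add_distrib]
        rw [e1, e2]
      exact left_eq_add.mp heq
theorem main_iff (D : Fin (n+1) → Fin (m+1) → (A →ₗ[k] C)) :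
    IsHSDeriv2 k n m D ↔ IsHSDeriv k n (toE k m n D) := by
  unfold IsHSDeriv2 IsHSDeriv
  constructor
  · rintro ⟨h1, h2⟩
    refine ⟨?_, (cond2_iff k m n D).mp h2⟩
    rw [toE_apply]
    have he : (fun j => D 0 j 1) = (fun j : Fin (m+1) => if j = 0 then (1:C) else 0) :=
      funext (unit_lemma k m n D h1 h2)
    rw [he]
    exact PhiLin_one k m
  · rintro ⟨e1, e2⟩
    refine ⟨?_, (cond2_iff k m n D).mpr e2⟩
    have h0 : toE k m n D 0 1
        = PhiLin k m (fun j : Fin (m+1) => if j = 0 then (1:C) else 0) := by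
      rw [PhiLin_one k m]; exact e1
    rw [toE_apply] at h0
    have hfa : (fun j => D 0 j 1) = (fun j : Fin (m+1) => if j = 0 then (1:C) else 0) :=
      PhiLin_injective k m h0
    simpa using congrFun hfa 0

noncomputable def dataEquiv : (Fin (n+1) → Fin (m+1) → (A →ₗ[k] C)) ≃
    (Fin (n+1) → (A →ₗ[k] Polynomial C ⧸ Ideal.span {(X : Polynomial C) ^ (m+1)})) where
  toFun := toE k m n
  invFun E := fun i j => (LinearMap.proj j).comp (((Phi k m).symm.toLinearMap).comp (E i))
  left_inv D := by
    funext i j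
    ext a
    simp only [LinearMap.comp_apply, LinearEquiv.coe_coe, LinearMap.proj_apply]
    have h : toE k m n D i a = Phi k m (fun j => D i j a) := rfl
    rw [h, LinearEquiv.symm_apply_apply]
  right_inv E := by
    funext i
    ext a
    have h : toE k m n (fun i j =>
        (LinearMap.proj j).comp (((Phi k m).symm.toLinearMap).comp (E i))) i a
        = Phi k m ((Phi k m).symm (E i a)) := rfl
    rw [h, LinearEquiv.apply_symm_apply]

end Aux

/-- the map sending `D ∈ HS^{(n,m)}_k(A,C)` to the family
`E = (E_i)_{i=0}^n`, `E_i(a) = Σ_{j=0}^m D_{(i,j)}(a)·Y^j`, is a well-defined bijection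
from `HS^{(n,m)}_k(A,C)` onto `HS^n_k(A, C[Y]/(Y^{m+1}))`. -/
theorem hs_deriv2_equiv_iterated (k A C : Type*) [CommRing k] [CommRing A] [CommRing C]
    [Algebra k A] [Algebra k C] (n m : ℕ) :
    ∃ e : {D : Fin (n + 1) → Fin (m + 1) → (A →ₗ[k] C) // IsHSDeriv2 k n m D} ≃
        {E : Fin (n + 1) →
            (A →ₗ[k] Polynomial C ⧸ Ideal.span {(Polynomial.X : Polynomial C) ^ (m + 1)}) //
          IsHSDeriv k n E},
      ∀ (D : {D : Fin (n + 1) → Fin (m + 1) → (A →ₗ[k] C) // IsHSDeriv2 k n m D})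
        (i : Fin (n + 1)) (a : A),
        (e D).1 i a = Ideal.Quotient.mk _
          (∑ j : Fin (m + 1), Polynomial.monomial (j : ℕ) (D.1 i j a)) := by
  refine ⟨Equiv.subtypeEquiv (dataEquiv k m n (A := A) (C := C))
      (fun D => main_iff k m n D), fun D i a => ?_⟩
  show toE k m n D.1 i a = _
  rw [toE_apply, PhiLin_apply]
end

section
/- Let A and B be commutative rings and let P be a module carrying both an A-module structure and a B-module structure whose scalar actions commute. Suppose P is finitely generated and projective as a B-module, and let P^∨ = Hom_B(P,B), endowed with the A-module structure (a·f)(p) = f(a·p). Then for every A-module M and every B-module N there is a bijection Hom_A(M, N ⊗_B P) ≃ Hom_B(M ⊗_A P^∨, N), natural in M and N, where N ⊗_B P is an A-module via the A-action on P and M ⊗_A P^∨ is a B-module via the B-action on P^∨. -/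
open TensorProduct

universe v w

section Dual

variable (A B : Type*) [CommRing A] [CommRing B]
variable (P : Type*) [AddCommGroup P] [Module A P] [Module B P] [SMulCommClass A B P]

/-- The dual `P^∨ = Hom_B(P,B)` of a `(B,A)`-bimodule `P` (type synonym, to carry the
`(A,B)`-bimodule structure with `A` acting through the argument). -/
def DualMod : Type _ := P →ₗ[B] B

variable {B P} in
/-- An element of `DualMod B P` as an actual `B`-linear map `P → B`. -/
def DualMod.lin (f : DualMod B P) : P →ₗ[B] B := f

variable {B P} in
lemma DualMod.ext' {f g : DualMod B P} (h : ∀ p, f.lin p = g.lin p) : f = g :=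
  LinearMap.ext h

noncomputable instance : AddCommGroup (DualMod B P) :=
  inferInstanceAs (AddCommGroup (P →ₗ[B] B))

/-- The `R`-module structure on `P^∨ = Hom_B(P,B)`, for `R` acting on `P` commuting with
`B`, given by `(r • f) p = f (r • p)`.  For `R = B` this coincides with the pointwise
scaling (since `f` is `B`-linear), and for `R = A` it is the `A`-structure of the dual
`(A,B)`-bimodule. -/
noncomputable instance dualModule : Module A (DualMod B P) where
  smul a f := { toFun := fun p => f.lin (a • p),
                map_add' := fun p q => by
                  show f.lin (a • (p + q)) = f.lin (a • p) + f.lin (a • q)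
                  rw [smul_add, map_add],
                map_smul' := fun b p => by
                  show f.lin (a • b • p) = b • f.lin (a • p)
                  rw [smul_comm a b p, map_smul] }
  one_smul f := by
    apply DualMod.ext'; intro p
    show f.lin ((1 : A) • p) = f.lin p; rw [one_smul]
  mul_smul a a' f := by
    apply DualMod.ext'; intro p
    show f.lin ((a * a') • p) = f.lin (a' • a • p); rw [mul_comm, mul_smul]
  smul_zero a := by apply DualMod.ext'; intro p; rfl
  smul_add a f g := by apply DualMod.ext'; intro p; rfl
  add_smul a a' f := by
    apply DualMod.ext'; intro p
    show f.lin ((a + a') • p) = f.lin (a • p) + f.lin (a' • p)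
    rw [add_smul, map_add]
  zero_smul f := by
    apply DualMod.ext'; intro p
    show f.lin ((0 : A) • p) = 0; rw [zero_smul, map_zero]

variable {A B P} in
lemma dualModule_smul_apply (a : A) (f : DualMod B P) (p : P) :
    (a • f).lin p = f.lin (a • p) := rfl

instance : SMulCommClass B A P := SMulCommClass.symm A B P

noncomputable instance : SMulCommClass A B (DualMod B P) where
  smul_comm a b f := by
    apply DualMod.ext'; intro p
    rw [dualModule_smul_apply, dualModule_smul_apply, dualModule_smul_apply,
      dualModule_smul_apply, smul_comm]

end Dual

/-!
For `P` finitely generated projective over `B`, the contraction `P ⊗_B N → Hom_B(P^∨, N)`,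
`p ⊗ n ↦ (f ↦ f(p) • n)`, is an isomorphism, since `P ≅ P^∨∨` and `P^∨` is again finitely
generated projective. Contraction is `A`-equivariant (contracting `a • x` with `f` is contracting
`x` with `a • f`), so its inverse is too, and an `A`-linear `φ : M → P ⊗_B N` amounts to an
`A`-balanced family `m ↦ contract (φ m) : M → Hom_B(P^∨, N)`, i.e. to a `B`-linear map
`P^∨ ⊗_A M → N`.
-/

namespace TensorProduct

variable {A B : Type*} [CommRing A] [CommRing B]
variable {X : Type*} [AddCommGroup X] [Module A X] [Module B X] [SMulCommClass A B X]
variable {M : Type*} [AddCommGroup M] [Module A M] {N : Type*} [AddCommGroup N] [Module B N]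

variable (A B) in
def tmulRight (m : M) : X →ₗ[B] X ⊗[A] M where
  toFun x := x ⊗ₜ m
  map_add' x y := add_tmul x y m
  map_smul' b x := (smul_tmul' b x m).symm

@[simp] lemma tmulRight_apply (m : M) (x : X) : tmulRight A B m x = x ⊗ₜ m := rfl

noncomputable def liftOfBalanced (ψ : M →+ X →ₗ[B] N)
    (hψ : ∀ (a : A) m x, ψ (a • m) x = ψ m (a • x)) : X ⊗[A] M →ₗ[B] N :=
  let F := liftAddHom (LinearMap.toAddMonoidHom'.comp ψ).flip fun a x m => (hψ a m x).symm
  have map_smul_F (b : B) (t : X ⊗[A] M) : F (b • t) = b • F t := by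
    induction t with
    | zero => simp
    | tmul x m => exact map_smul (ψ m) b x
    | add s t hs ht => rw [smul_add, map_add, map_add, hs, ht, smul_add]
  { F with map_smul' := map_smul_F }

@[simp] lemma liftOfBalanced_tmul (ψ : M →+ X →ₗ[B] N)
    (hψ : ∀ (a : A) m x, ψ (a • m) x = ψ m (a • x)) (x : X) (m : M) :
    liftOfBalanced ψ hψ (x ⊗ₜ m) = ψ m x :=
  rfl

end TensorProduct

namespace DualMod

variable {A B P : Type*} [CommRing A] [CommRing B]
variable [AddCommGroup P] [Module A P] [Module B P] [SMulCommClass A B P]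

variable (B P) in
def equivDual : DualMod B P ≃ₗ[B] Module.Dual B P where
  toFun f := f.lin
  invFun f := f
  map_add' _ _ := rfl
  map_smul' b f := LinearMap.ext fun p => f.lin.map_smul b p
  left_inv _ := rfl
  right_inv _ := rfl

variable [Module.Finite B P] [Module.Projective B P]
variable {M : Type*} [AddCommGroup M] [Module A M] (N : Type*) [AddCommGroup N] [Module B N]

noncomputable def contractEquiv : P ⊗[B] N ≃ₗ[B] (DualMod B P →ₗ[B] N) :=
  (Module.evalEquiv B P).rTensor N ≪≫ₗ dualTensorHomEquiv B (Module.Dual B P) N ≪≫ₗ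
    (equivDual B P).symm.arrowCongr (LinearEquiv.refl B N)

lemma contractEquiv_tmul_apply (p : P) (n : N) (f : DualMod B P) :
    contractEquiv N (p ⊗ₜ n) f = f.lin p • n :=
  rfl

lemma contractEquiv_apply (x : P ⊗[B] N) (f : DualMod B P) :
    contractEquiv N x f = lift (LinearMap.lsmul B N ∘ₗ f.lin) x := by
  induction x with
  | zero => simp
  | tmul p n => exact contractEquiv_tmul_apply N _ _ _
  | add x y hx hy => simp only [map_add, LinearMap.add_apply, hx, hy]

lemma contractEquiv_smul (a : A) (x : P ⊗[B] N) (f : DualMod B P) :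
    contractEquiv N (a • x) f = contractEquiv N x (a • f) := by
  induction x with
  | zero => simp
  | tmul p n =>
    rw [smul_tmul', contractEquiv_tmul_apply, contractEquiv_tmul_apply, dualModule_smul_apply]
  | add x y hx hy => simp only [smul_add, map_add, LinearMap.add_apply, hx, hy]

variable {N}

noncomputable def liftContract (φ : M →ₗ[A] P ⊗[B] N) : DualMod B P ⊗[A] M →ₗ[B] N :=
  liftOfBalanced ((contractEquiv N).toAddMonoidHom.comp φ.toAddMonoidHom) fun a m f => by
    simp [contractEquiv_smul]

@[simp] lemma liftContract_tmul (φ : M →ₗ[A] P ⊗[B] N) (f : DualMod B P) (m : M) :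
    liftContract φ (f ⊗ₜ m) = contractEquiv N (φ m) f :=
  rfl

noncomputable def uncontract (g : DualMod B P ⊗[A] M →ₗ[B] N) : M →ₗ[A] P ⊗[B] N where
  toFun m := (contractEquiv N).symm (g ∘ₗ tmulRight A B m)
  map_add' m m' := by
    rw [← map_add]
    congr 1
    ext f
    simp [tmul_add]
  map_smul' a m := (contractEquiv N).injective <| LinearMap.ext fun f => by
    simp [contractEquiv_smul, smul_tmul']

lemma contractEquiv_uncontract (g : DualMod B P ⊗[A] M →ₗ[B] N) (m : M) :
    contractEquiv N (uncontract g m) = g ∘ₗ tmulRight A B m :=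
  (contractEquiv N).apply_symm_apply _

variable (M N) in
noncomputable def homTensorEquiv : (M →ₗ[A] P ⊗[B] N) ≃ ((DualMod B P) ⊗[A] M →ₗ[B] N) where
  toFun := liftContract
  invFun := uncontract
  left_inv φ := LinearMap.ext fun m => (contractEquiv N).injective <| by
    ext f
    rw [contractEquiv_uncontract, LinearMap.comp_apply, tmulRight_apply, liftContract_tmul]
  right_inv g := by
    ext t
    induction t with
    | zero => simp
    | tmul f m =>
      rw [liftContract_tmul, contractEquiv_uncontract, LinearMap.comp_apply, tmulRight_apply]
    | add s t hs ht => simp only [map_add, hs, ht]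

end DualMod

/-- let `P` be a `(B,A)`-bimodule which is finitely generated and projective
as a `B`-module, and `P^∨ = Hom_B(P,B)` its dual, an `(A,B)`-bimodule via
`(a • f) p = f (a • p)`.  Then for every `A`-module `M` and `B`-module `N` there is a
bijection `Hom_A(M, N ⊗_B P) ≃ Hom_B(M ⊗_A P^∨, N)`, natural in `M` and `N`; it is given
by `φ ↦ (f ⊗ m ↦ (f ⊗ id_N)(φ m))`, contracting with the evaluation. -/
theorem dual_bimodule_hom_equiv (A B : Type*) [CommRing A] [CommRing B]
    (P : Type*) [AddCommGroup P] [Module A P] [Module B P] [SMulCommClass A B P]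
    [Module.Finite B P] [Module.Projective B P] :
    ∃ e : ∀ (M : Type v) [AddCommGroup M] [Module A M]
        (N : Type w) [AddCommGroup N] [Module B N],
        (M →ₗ[A] P ⊗[B] N) ≃ ((DualMod B P) ⊗[A] M →ₗ[B] N),
      ∀ (M : Type v) [AddCommGroup M] [Module A M]
        (N : Type w) [AddCommGroup N] [Module B N]
        (φ : M →ₗ[A] P ⊗[B] N) (f : DualMod B P) (m : M),
        e M N φ (f ⊗ₜ[A] m) =
          TensorProduct.lift ((LinearMap.lsmul B N) ∘ₗ f.lin) (φ m) :=
  ⟨fun M _ _ N _ _ => DualMod.homTensorEquiv M N,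
    fun _ _ _ N _ _ φ f m => DualMod.contractEquiv_apply N (φ m) f⟩
end

section
/- Let D = (D_i)_{i∈ℕ} be a higher derivation of order ∞ from A to C over k. Let P_D be the free C-module with basis (e_i)_{i∈ℕ}, endowed with the A-module structure determined by a·(Σ_i c_i e_i) = Σ_i c_i·(Σ_{j=0}^i D_{i-j}(a)·e_j) (a finite sum in each degree); this is a well-defined A-module structure commuting with the C-action. Then for every A-module M and every C-module N there is a bijection HS^∞_D(M,N) ≃ Hom_C(M ⊗_A P_D, N), natural in N; i.e., the functor N ↦ HS^∞_D(M,N) from C-modules to sets is represented by the C-module M ⊗_A P_D. -/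
/-!
A `C`-linear map `P ⊗[A] M → N` is the same as a `C`-linear map `f : P → Hom_k(M, N)` that is
`A`-balanced, `f (a • p) m = f p (a • m)`; here one needs the two `k`-actions on `P`, through `A`
and through `C`, to agree, which follows from expanding `(c • 1) • e_i` with the `k`-linearity of
the `D_n`. Since `P` is free on `(e_i)`, such an `f` is the same as the family `Δ_i = f e_i`, and
balancedness tested on `a • e_i = Σ_j D_{i-j}(a) • e_j` is exactly the Leibniz rule for `Δ`.
-/

open TensorProduct

universe w

/-- A higher derivation of order `∞` from `A` to `C` over `k`. -/
def IsHSDerivInf (k : Type*) {A C : Type*} [CommRing k] [CommRing A] [CommRing C]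
    [Algebra k A] [Algebra k C] (D : ℕ → (A →ₗ[k] C)) : Prop :=
  D 0 1 = 1 ∧
    ∀ (i : ℕ) (a b : A),
      D i (a * b) = ∑ p ∈ Finset.range (i + 1), D p a * D (i - p) b

section HigherDerivations

open Finset

theorem Finset.sum_range_succ_sub_comm {M : Type*} [AddCommMonoid M] (f : ℕ → ℕ → M) (n : ℕ) :
    ∑ j ∈ range (n + 1), f (n - j) j = ∑ j ∈ range (n + 1), f j (n - j) := by
  rw [← Nat.sum_antidiagonal_eq_sum_range_succ f,
    ← Nat.sum_antidiagonal_eq_sum_range_succ fun i j => f j i, ← Nat.sum_antidiagonal_swap]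
  rfl

variable {k A C P M N : Type*} [CommRing k] [CommRing A] [CommRing C]
  [AddCommGroup P] [Module A P] [Module C P]
  [AddCommGroup M] [Module A M] [Module k M]
  [AddCommGroup N] [Module C N] [Module k N]

def IsHSDerivOver [Algebra k A] [Algebra k C] (D : ℕ → A →ₗ[k] C) (Δ : ℕ → M →ₗ[k] N) : Prop :=
  ∀ (i : ℕ) (a : A) (m : M), Δ i (a • m) = ∑ p ∈ range (i + 1), D p a • Δ (i - p) m

section BalancedMaps

variable [SMulCommClass A C P]

def tensorLift [SMulCommClass k C N] (f : P →ₗ[C] M →ₗ[k] N)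
    (hf : ∀ (a : A) p m, f (a • p) m = f p (a • m)) : P ⊗[A] M →ₗ[C] N where
  toFun := liftAddHom (LinearMap.toAddMonoidHom'.comp f.toAddMonoidHom) hf
  map_add' := map_add _
  map_smul' c t := by
    induction t using TensorProduct.induction_on with
    | zero => simp only [smul_zero, map_zero]
    | tmul p m =>
      show f (c • p) m = c • f p m
      rw [map_smul, LinearMap.smul_apply]
    | add x y hx hy => simp_all only [smul_add, map_add]

variable [Algebra k A] [Algebra k C] [IsScalarTower k A M] [IsScalarTower k C N]

def tensorCurry (hP : ∀ (c : k) (p : P), algebraMap k A c • p = algebraMap k C c • p)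
    (φ : P ⊗[A] M →ₗ[C] N) : P →ₗ[C] M →ₗ[k] N :=
  LinearMap.mk₂' C k (fun p m => φ (p ⊗ₜ m))
    (fun _ _ _ => by rw [add_tmul, map_add])
    (fun _ _ _ => by rw [← smul_tmul', map_smul])
    (fun _ _ _ => by rw [tmul_add, map_add])
    (fun c p m => by
      rw [← algebraMap_smul A c m, ← smul_tmul, hP, ← smul_tmul', map_smul, algebraMap_smul])

def tensorHomEquivBalanced
    (hP : ∀ (c : k) (p : P), algebraMap k A c • p = algebraMap k C c • p) :
    (P ⊗[A] M →ₗ[C] N) ≃ {f : P →ₗ[C] M →ₗ[k] N // ∀ (a : A) p m, f (a • p) m = f p (a • m)} where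
  toFun φ := ⟨tensorCurry hP φ, fun a p m => congrArg φ (smul_tmul a p m)⟩
  invFun f := tensorLift f.1 f.2
  left_inv φ := LinearMap.ext fun t => by
    induction t using TensorProduct.induction_on with
    | zero => simp only [map_zero]
    | tmul p m => rfl
    | add x y hx hy => rw [map_add, map_add, hx, hy]
  right_inv _ := rfl

end BalancedMaps

section Basis

variable [Algebra k A] [Algebra k C] {D : ℕ → A →ₗ[k] C} (b : Module.Basis ℕ C P)

theorem algebraMap_smul_eq_of_basis [SMulCommClass A C P]
    (hsmul : ∀ (a : A) (i : ℕ), a • b i = ∑ j ∈ range (i + 1), D (i - j) a • b j)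
    (c : k) (p : P) : algebraMap k A c • p = algebraMap k C c • p := by
  suffices DistribSMul.toLinearMap C P (algebraMap k A c) = algebraMap k C c • LinearMap.id from
    LinearMap.congr_fun this p
  refine b.ext fun i => ?_
  calc algebraMap k A c • b i = ∑ j ∈ range (i + 1), D (i - j) (c • 1) • b j := by
        rw [hsmul, Algebra.algebraMap_eq_smul_one]
    _ = algebraMap k C c • ∑ j ∈ range (i + 1), D (i - j) 1 • b j := by
        rw [smul_sum]
        refine sum_congr rfl fun j _ => ?_
        rw [map_smul, Algebra.smul_def, mul_smul]
    _ = algebraMap k C c • b i := by rw [← hsmul, one_smul]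

theorem constr_balanced_iff [SMulCommClass A C P] [SMulCommClass k C N]
    (hsmul : ∀ (a : A) (i : ℕ), a • b i = ∑ j ∈ range (i + 1), D (i - j) a • b j)
    (Δ : ℕ → M →ₗ[k] N) :
    (∀ (a : A) p m, b.constr C Δ (a • p) m = b.constr C Δ p (a • m)) ↔ IsHSDerivOver D Δ := by
  have constr_smul_basis (a : A) (i : ℕ) (m : M) :
      b.constr C Δ (a • b i) m = ∑ p ∈ range (i + 1), D p a • Δ (i - p) m := by
    simp only [hsmul, map_sum, map_smul, Module.Basis.constr_basis, LinearMap.coe_sum,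
      Finset.sum_apply, LinearMap.smul_apply]
    exact sum_range_succ_sub_comm (fun p j => D p a • Δ j m) i
  constructor
  · intro h i a m
    rw [← Module.Basis.constr_basis b C Δ i, ← h, constr_smul_basis]
  · intro hΔ a p m
    suffices (LinearMap.applyₗ' C m).comp ((b.constr C Δ).comp (DistribSMul.toLinearMap C P a)) =
        (LinearMap.applyₗ' C (a • m)).comp (b.constr C Δ) from LinearMap.congr_fun this p
    refine b.ext fun i => ?_
    simp only [LinearMap.comp_apply, DistribSMul.toLinearMap_apply, LinearMap.applyₗ'_apply_apply,
      constr_smul_basis, Module.Basis.constr_basis, hΔ i a m]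

noncomputable def hsDerivOverEquivBalanced [SMulCommClass A C P] [SMulCommClass k C N]
    (hsmul : ∀ (a : A) (i : ℕ), a • b i = ∑ j ∈ range (i + 1), D (i - j) a • b j) :
    {Δ : ℕ → M →ₗ[k] N // IsHSDerivOver D Δ} ≃
      {f : P →ₗ[C] M →ₗ[k] N // ∀ (a : A) p m, f (a • p) m = f p (a • m)} :=
  (b.constr C).toEquiv.subtypeEquiv fun Δ => (constr_balanced_iff b hsmul Δ).symm

end Basis

end HigherDerivations

theorem hs_module_inf_represents_general (k A C : Type*) [CommRing k] [CommRing A] [CommRing C]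
    [Algebra k A] [Algebra k C]
    (D : ℕ → (A →ₗ[k] C))
    (P : Type*) [AddCommGroup P] [Module C P] [Module A P] [SMulCommClass A C P]
    (b : Module.Basis ℕ C P)
    (hsmul : ∀ (a : A) (i : ℕ),
      a • b i = ∑ j ∈ Finset.range (i + 1), D (i - j) a • b j)
    (M : Type*) [AddCommGroup M] [Module A M] [Module k M] [IsScalarTower k A M] :
    ∃ e : ∀ (N : Type w) [AddCommGroup N] [Module C N] [Module k N] [IsScalarTower k C N],
        {Δ : ℕ → (M →ₗ[k] N) //
          ∀ (i : ℕ) (a : A) (m : M),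
            Δ i (a • m) = ∑ p ∈ Finset.range (i + 1), D p a • Δ (i - p) m} ≃
        (P ⊗[A] M →ₗ[C] N),
      ∀ (N : Type w) [AddCommGroup N] [Module C N] [Module k N] [IsScalarTower k C N]
        (Δ : {Δ : ℕ → (M →ₗ[k] N) //
          ∀ (i : ℕ) (a : A) (m : M),
            Δ i (a • m) = ∑ p ∈ Finset.range (i + 1), D p a • Δ (i - p) m})
        (j : ℕ) (m : M),
        e N Δ (b j ⊗ₜ[A] m) = Δ.1 j m :=
  ⟨fun _ _ _ _ _ => (hsDerivOverEquivBalanced b hsmul).trans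
      (tensorHomEquivBalanced (algebraMap_smul_eq_of_basis b hsmul)).symm,
    fun _ _ _ _ _ Δ j m => congrArg (· m) (b.constr_basis C Δ.1 j)⟩

/-- let `D ∈ HS^∞_k(A,C)` and let `P_D` be the free `C`-module with basis
`(e_i)_{i∈ℕ}` endowed with the `A`-module structure (commuting with the `C`-action)
determined by `a • e_i = Σ_{j=0}^i D_{i-j}(a) • e_j`.  Then for every `A`-module `M` the
functor `N ↦ HS^∞_D(M,N)` on `C`-modules is represented by the `C`-module `M ⊗_A P_D`:
there are bijections `HS^∞_D(M,N) ≃ Hom_C(M ⊗_A P_D, N)`, natural in `N`, sending `Δ` to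
the map determined by `e_j ⊗ m ↦ Δ_j(m)`. -/
theorem hs_module_inf_represents (k A C : Type*) [CommRing k] [CommRing A] [CommRing C]
    [Algebra k A] [Algebra k C]
    (D : ℕ → (A →ₗ[k] C)) (hD : IsHSDerivInf k D)
    (P : Type*) [AddCommGroup P] [Module C P] [Module A P] [SMulCommClass A C P]
    (b : Module.Basis ℕ C P)
    (hsmul : ∀ (a : A) (i : ℕ),
      a • b i = ∑ j ∈ Finset.range (i + 1), D (i - j) a • b j)
    (M : Type*) [AddCommGroup M] [Module A M] [Module k M] [IsScalarTower k A M] :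
    ∃ e : ∀ (N : Type w) [AddCommGroup N] [Module C N] [Module k N] [IsScalarTower k C N],
        {Δ : ℕ → (M →ₗ[k] N) //
          ∀ (i : ℕ) (a : A) (m : M),
            Δ i (a • m) = ∑ p ∈ Finset.range (i + 1), D p a • Δ (i - p) m} ≃
        (P ⊗[A] M →ₗ[C] N),
      ∀ (N : Type w) [AddCommGroup N] [Module C N] [Module k N] [IsScalarTower k C N]
        (Δ : {Δ : ℕ → (M →ₗ[k] N) //
          ∀ (i : ℕ) (a : A) (m : M),
            Δ i (a • m) = ∑ p ∈ Finset.range (i + 1), D p a • Δ (i - p) m})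
        (j : ℕ) (m : M),
        e N Δ (b j ⊗ₜ[A] m) = Δ.1 j m :=
  hs_module_inf_represents_general k A C D P b hsmul M
end
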